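/- arXiv:math/0502310 — 3 statements merged into one kernel-verified Lean document; each statement's English description precedes it below -/
import Mathlib

section
/- Let G be a finite connected simple graph with p vertices and q edges. For every vertex x of G, the status s(x) = Σ_y d(x,y) satisfies 2·s(x) ≤ (p − 1)(p + 2) − 2q, i.e. s(x) ≤ (p − 1)(p + 2)/2 − q. -/
/-!
Sort the vertices by their distance from `x`. If `d(x, y) = k`, each of the levels
`0, …, k - 2` contains a vertex `u`, and `u` is not adjacent to `y` because adjacent vertices
lie on equal or neighbouring levels. The pair `{u, y}` remembers `y` as its farther end, so
these non-edges are distinct for distinct `y`: hence `∑ y, (d(x, y) - 1) ≤ C(p, 2) - q`, the sum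
running over the `p - 1` vertices `y ≠ x`.
-/

open Finset

namespace SimpleGraph

variable {V : Type*} {G : SimpleGraph V}

lemma Reachable.exists_dist_eq {x y : V} (h : G.Reachable x y) {i : ℕ} (hi : i ≤ G.dist x y) :
    ∃ u, G.dist x u = i := by
  obtain ⟨p, hp⟩ := h.exists_walk_length_eq_dist
  refine ⟨p.getVert i, le_antisymm ?_ ?_⟩
  · simpa [Walk.take_length, hp, hi] using dist_le (p.take i)
  · have hdrop : G.dist (p.getVert i) y ≤ G.dist x y - i := by
      simpa [Walk.drop_length, hp] using dist_le (p.drop i)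
    have := (p.drop i).reachable.dist_triangle_right x
    omega

lemma dist_le_dist_add_one_of_adj {x u v : V} (h : G.Adj u v) :
    G.dist x v ≤ G.dist x u + 1 := by
  rcases h.diff_dist_adj (u := x) with h | h | h <;> omega

variable [Fintype V]

noncomputable def farBelow (G : SimpleGraph V) (x y : V) : Finset V :=
  {u | G.dist x u + 2 ≤ G.dist x y}

lemma Reachable.dist_le_card_farBelow_add_one {x y : V} (h : G.Reachable x y) :
    G.dist x y ≤ #(G.farBelow x y) + 1 := by
  have hlevels : range (G.dist x y - 1) ⊆ (G.farBelow x y).image (G.dist x) := by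
    intro i hi
    rw [mem_range] at hi
    obtain ⟨u, hu⟩ := h.exists_dist_eq (i := i) (by omega)
    exact mem_image.2 ⟨u, mem_filter.2 ⟨mem_univ u, by omega⟩, hu⟩
  have := (card_le_card hlevels).trans card_image_le
  rw [card_range] at this
  omega

lemma sum_card_farBelow_add_card_edgeFinset_le [DecidableEq V] [DecidableRel G.Adj] (x : V) :
    ∑ y, #(G.farBelow x y) + #G.edgeFinset ≤ (Fintype.card V).choose 2 := by
  set P : Finset (V × V) := {q | G.dist x q.1 + 2 ≤ G.dist x q.2}
  have hP : #P = ∑ y, #(G.farBelow x y) := by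
    simp only [P, farBelow, card_filter, Fintype.sum_prod_type_right]
  have hinj : Set.InjOn (fun q : V × V => s(q.1, q.2)) P := by
    rintro ⟨a, b⟩ hab ⟨c, d⟩ hcd he
    simp only [P, mem_coe, mem_filter, mem_univ, true_and] at hab hcd
    rcases Sym2.eq_iff.1 he with ⟨rfl, rfl⟩ | ⟨rfl, rfl⟩
    · rfl
    · dsimp only at hab hcd
      omega
  have hdisj : Disjoint (P.image fun q => s(q.1, q.2)) G.edgeFinset := by
    rw [Finset.disjoint_left]
    simp only [mem_image, P, mem_filter, mem_univ, true_and, mem_edgeFinset]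
    rintro _ ⟨⟨a, b⟩, hab, rfl⟩ hadj
    rw [mem_edgeSet] at hadj
    have := dist_le_dist_add_one_of_adj (x := x) hadj
    omega
  have hsub : P.image (fun q => s(q.1, q.2)) ∪ G.edgeFinset ⊆
      (⊤ : SimpleGraph V).edgeFinset := by
    refine union_subset ?_ (edgeFinset_mono le_top)
    simp only [subset_iff, mem_image, P, mem_filter, mem_univ, true_and]
    rintro _ ⟨⟨a, b⟩, hab, rfl⟩
    rw [mem_edgeFinset, mem_edgeSet, top_adj]
    dsimp only at hab ⊢
    rintro rfl
    omega
  rw [← hP, ← card_image_of_injOn hinj, ← card_union_of_disjoint hdisj,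
    ← card_edgeFinset_top_eq_card_choose_two]
  exact card_le_card hsub

lemma Connected.sum_dist_le [DecidableEq V] (hG : G.Connected) (x : V) :
    ∑ y, G.dist x y ≤ ∑ y, #(G.farBelow x y) + (Fintype.card V - 1) :=
  calc ∑ y, G.dist x y = ∑ y ∈ univ.erase x, G.dist x y := (sum_erase _ dist_self).symm
    _ ≤ ∑ y ∈ univ.erase x, (#(G.farBelow x y) + 1) :=
      sum_le_sum fun y _ => (hG.preconnected x y).dist_le_card_farBelow_add_one
    _ = ∑ y ∈ univ.erase x, #(G.farBelow x y) + (Fintype.card V - 1) := by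
      rw [sum_add_distrib, sum_const, card_erase_of_mem (mem_univ x), card_univ, smul_eq_mul,
        mul_one]
    _ ≤ ∑ y, #(G.farBelow x y) + (Fintype.card V - 1) := by
      gcongr
      exact erase_subset x univ

end SimpleGraph

/-- For a finite connected simple graph with `p` vertices and `q` edges, the
status `s(x) = ∑ y, d(x, y)` of any vertex `x` satisfies
`2 s(x) ≤ (p - 1)(p + 2) - 2 q`. -/
theorem status_upper_bound {V : Type*} [Fintype V] (G : SimpleGraph V)
    [DecidableRel G.Adj] (hG : G.Connected) (x : V) :
    2 * (∑ y, G.dist x y : ℤ) ≤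
      ((Fintype.card V : ℤ) - 1) * ((Fintype.card V : ℤ) + 2)
        - 2 * (G.edgeFinset.card : ℤ) := by
  classical
  have hp : 1 ≤ Fintype.card V := Fintype.card_pos_iff.2 hG.nonempty
  have key : ∑ y, G.dist x y + #G.edgeFinset ≤
      (Fintype.card V).choose 2 + (Fintype.card V - 1) := by
    have := hG.sum_dist_le x
    have := G.sum_card_farBelow_add_card_edgeFinset_le x
    omega
  have hQ : (∑ y, (G.dist x y : ℚ)) + #G.edgeFinset ≤
      (Fintype.card V : ℚ) * (Fintype.card V - 1) / 2 + (Fintype.card V - 1) := by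
    rw [← Nat.cast_choose_two, ← Nat.cast_pred hp]
    exact_mod_cast key
  qify
  linarith
end

section
/- For every pair of natural numbers p and q with p ≥ 1 and p − 1 ≤ q ≤ p(p − 1)/2, there exists a finite connected simple graph G with p vertices and q edges containing a vertex x whose status equals the upper bound: 2·s(x) = (p − 1)(p + 2) − 2q, i.e. s(x) = (p − 1)(p + 2)/2 − q. -/
open Finset SimpleGraph

private def rel (t r i j : ℕ) : Prop := j = i + 1 ∨ t ≤ i ∨ (i + 1 = t ∧ j < t + r)

private instance rel.dec (t r i j : ℕ) : Decidable (rel t r i j) := by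
  unfold rel; infer_instance

private def dd (t r j : ℕ) : ℕ := if j ≤ t then j else if j < t + r then t else t + 1

private def myG (p t r : ℕ) : SimpleGraph (Fin p) where
  Adj a b := (a.val < b.val ∧ rel t r a.val b.val) ∨ (b.val < a.val ∧ rel t r b.val a.val)
  symm := ⟨by intro a b h; tauto⟩
  loopless := ⟨by intro a h; rcases h with ⟨h, _⟩ | ⟨h, _⟩ <;> exact absurd h (lt_irrefl _)⟩

private instance myG.dec (p t r : ℕ) : DecidableRel (myG p t r).Adj := fun a b => by
  unfold myG; simp only; infer_instance


section dist
variable {p t r : ℕ}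

private lemma dd_step (hr : 1 ≤ r) {i j : ℕ} (hij : i < j) (h : rel t r i j) :
    dd t r j ≤ dd t r i + 1 ∧ dd t r i ≤ dd t r j + 1 := by
  rcases h with h | h | ⟨h1, h2⟩ <;> unfold dd <;> split_ifs <;> omega

private lemma adj_dd (hr : 1 ≤ r) {a b : Fin p} (h : (myG p t r).Adj a b) :
    dd t r b.val ≤ dd t r a.val + 1 := by
  rcases h with ⟨h1, h2⟩ | ⟨h1, h2⟩
  · exact (dd_step hr h1 h2).1
  · exact (dd_step hr h1 h2).2

private lemma walk_bound (hr : 1 ≤ r) {a b : Fin p} (w : (myG p t r).Walk a b) :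
    dd t r b.val ≤ dd t r a.val + w.length := by
  induction w with
  | nil => simp
  | cons h w ih =>
    have := adj_dd hr h
    simp only [SimpleGraph.Walk.length_cons]
    omega

private lemma reach (hp0 : 0 < p) : ∀ j, (hj : j < p) →
    (myG p t r).Reachable ⟨0, hp0⟩ ⟨j, hj⟩ := by
  intro j
  induction j with
  | zero => intro hj; exact SimpleGraph.Reachable.refl _
  | succ n ih =>
    intro hj
    have h1 : n < p := by omega
    exact (ih h1).trans (SimpleGraph.Adj.reachable (Or.inl ⟨by simp, Or.inl rfl⟩))

private lemma myG_connected (hp0 : 0 < p) : (myG p t r).Connected := by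
  rw [SimpleGraph.connected_iff_exists_forall_reachable]
  exact ⟨⟨0, hp0⟩, fun v => reach hp0 v.val v.isLt⟩

private lemma dist_ub (hp0 : 0 < p) (ht : 1 ≤ t) (hr : 1 ≤ r) (htr : t + r ≤ p) :
    ∀ j, (hj : j < p) → (myG p t r).dist ⟨0, hp0⟩ ⟨j, hj⟩ ≤ dd t r j := by
  have hc : (myG p t r).Connected := myG_connected hp0
  intro j
  induction j using Nat.strong_induction_on with
  | _ j ih =>
    intro hj
    rcases Nat.eq_zero_or_pos j with h0 | h0
    · subst h0; simp [SimpleGraph.dist_self, dd]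
    by_cases hle : j ≤ t
    · -- step from j-1
      have hj1 : j - 1 < p := by omega
      have hadj : (myG p t r).Adj ⟨j - 1, hj1⟩ ⟨j, hj⟩ :=
        Or.inl ⟨by simp; omega, Or.inl (by simp; omega)⟩
      have h2 : (myG p t r).dist ⟨j-1, hj1⟩ ⟨j, hj⟩ ≤ 1 :=
        SimpleGraph.dist_le (hadj.toWalk)
      have h3 := hc.dist_triangle (v := (⟨j-1, hj1⟩ : Fin p))
        (u := (⟨0, hp0⟩ : Fin p)) (w := (⟨j, hj⟩ : Fin p))
      have h4 := ih (j-1) (by omega) hj1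
      have h5 : dd t r (j-1) = j - 1 := by unfold dd; split_ifs <;> omega
      have h6 : dd t r j = j := by unfold dd; split_ifs <;> omega
      omega
    · by_cases hlt : j < t + r
      · -- adjacent to t-1
        have hj1 : t - 1 < p := by omega
        have hadj : (myG p t r).Adj ⟨t - 1, hj1⟩ ⟨j, hj⟩ :=
          Or.inl ⟨by simp; omega, Or.inr (Or.inr ⟨by simp; omega, by simp; omega⟩)⟩
        have h2 : (myG p t r).dist ⟨t-1, hj1⟩ ⟨j, hj⟩ ≤ 1 :=
          SimpleGraph.dist_le (hadj.toWalk)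
        have h3 := hc.dist_triangle (v := (⟨t-1, hj1⟩ : Fin p))
          (u := (⟨0, hp0⟩ : Fin p)) (w := (⟨j, hj⟩ : Fin p))
        have h4 := ih (t-1) (by omega) hj1
        have h5 : dd t r (t-1) = t - 1 := by unfold dd; split_ifs <;> omega
        have h6 : dd t r j = t := by unfold dd; split_ifs <;> omega
        omega
      · -- adjacent to t
        have hj1 : t < p := by omega
        have hadj : (myG p t r).Adj ⟨t, hj1⟩ ⟨j, hj⟩ :=
          Or.inl ⟨by simp; omega, Or.inr (Or.inl le_rfl)⟩
        have h2 : (myG p t r).dist ⟨t, hj1⟩ ⟨j, hj⟩ ≤ 1 :=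
          SimpleGraph.dist_le (hadj.toWalk)
        have h3 := hc.dist_triangle (v := (⟨t, hj1⟩ : Fin p))
          (u := (⟨0, hp0⟩ : Fin p)) (w := (⟨j, hj⟩ : Fin p))
        have h4 := ih t (by omega) hj1
        have h5 : dd t r t = t := by unfold dd; split_ifs <;> omega
        have h6 : dd t r j = t + 1 := by unfold dd; split_ifs <;> omega
        omega

private lemma dist_eq (hp0 : 0 < p) (ht : 1 ≤ t) (hr : 1 ≤ r) (htr : t + r ≤ p)
    (j : ℕ) (hj : j < p) : (myG p t r).dist ⟨0, hp0⟩ ⟨j, hj⟩ = dd t r j := by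
  refine le_antisymm (dist_ub hp0 ht hr htr j hj) ?_
  obtain ⟨w, hw⟩ := (reach (t := t) (r := r) hp0 j hj).exists_walk_length_eq_dist
  have := walk_bound hr w
  simp only [Fin.val_mk] at this
  have h0 : dd t r 0 = 0 := by unfold dd; split_ifs <;> omega
  omega

end dist

section sums
variable {t r m : ℕ}

private lemma sum_dd_base (hr : 1 ≤ r) :
    ∀ i, i ≤ r → ∑ j ∈ range (t + i), dd t r j = (∑ j ∈ range t, j) + i * t := by
  intro i
  induction i with
  | zero =>
    intro _
    simp only [Nat.add_zero, Nat.zero_mul]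
    refine sum_congr rfl fun j hj => ?_
    rw [mem_range] at hj
    unfold dd; split_ifs <;> omega
  | succ n ih =>
    intro hn
    rw [show t + (n+1) = (t+n) + 1 by omega, sum_range_succ, ih (by omega)]
    have : dd t r (t + n) = t := by unfold dd; split_ifs <;> omega
    rw [this]; ring

private lemma sum_dd (hr : 1 ≤ r) :
    ∑ j ∈ range (t + r + m), dd t r j =
      (∑ j ∈ range t, j) + r * t + m * (t + 1) := by
  induction m with
  | zero => rw [Nat.add_zero, sum_dd_base hr r le_rfl]; ring
  | succ n ih =>
    rw [show t + r + (n+1) = (t+r+n) + 1 by omega, sum_range_succ, ih]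
    have : dd t r (t + r + n) = t + 1 := by unfold dd; split_ifs <;> omega
    rw [this]; ring

end sums

section count

private lemma interval_count (p a b : ℕ) (hab : a ≤ b) (hbp : b ≤ p) :
    (∑ j ∈ range p, if a ≤ j ∧ j < b then 1 else 0) = b - a := by
  rw [Finset.sum_boole]
  have : (range p).filter (fun j => a ≤ j ∧ j < b) = Finset.Ico a b := by
    ext j; simp only [mem_filter, mem_range, mem_Ico]; omega
  rw [this]
  simp [Nat.card_Ico]

private lemma count_N (t r m : ℕ) (ht : 1 ≤ t) (hr : 1 ≤ r) :
    (∑ i ∈ range (t+r+m), ∑ j ∈ range (t+r+m), if i < j ∧ rel t r i j then 1 else 0)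
      = (t - 1) + r + ∑ i ∈ range (r+m), i := by
  set p := t + r + m with hp
  set hh : ℕ → ℕ := fun i => if i+1 < t then 1 else if i+1 = t then r else p-1-i with hhh
  have step1 : ∑ i ∈ range p, (∑ j ∈ range p, if i < j ∧ rel t r i j then 1 else 0)
      = ∑ i ∈ range p, hh i := by
    refine sum_congr rfl fun i hi => ?_
    rw [mem_range] at hi
    by_cases h1 : i + 1 < t
    · have heq : ∑ j ∈ range p, (if i < j ∧ rel t r i j then 1 else 0)
          = ∑ j ∈ range p, (if i+1 ≤ j ∧ j < i+2 then 1 else 0) :=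
        sum_congr rfl fun j hj => if_congr (by rw [mem_range] at hj; unfold rel; omega) rfl rfl
      rw [heq, interval_count p (i+1) (i+2) (by omega) (by omega)]
      simp only [hhh]; split_ifs <;> omega
    · by_cases h2 : i + 1 = t
      · have heq : ∑ j ∈ range p, (if i < j ∧ rel t r i j then 1 else 0)
            = ∑ j ∈ range p, (if t ≤ j ∧ j < t + r then 1 else 0) :=
          sum_congr rfl fun j hj => if_congr (by rw [mem_range] at hj; unfold rel; omega) rfl rfl
        rw [heq, interval_count p t (t+r) (by omega) (by omega)]
        simp only [hhh]; split_ifs <;> omega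
      · have h3 : t ≤ i := by omega
        have heq : ∑ j ∈ range p, (if i < j ∧ rel t r i j then 1 else 0)
            = ∑ j ∈ range p, (if i+1 ≤ j ∧ j < p then 1 else 0) :=
          sum_congr rfl fun j hj => if_congr (by rw [mem_range] at hj; unfold rel; omega) rfl rfl
        rw [heq, interval_count p (i+1) p (by omega) (by omega)]
        simp only [hhh]; split_ifs <;> omega
  rw [step1]
  have step2 : ∀ k, k ≤ r + m →
      ∑ i ∈ range (t + k), hh i = (∑ i ∈ range t, hh i) + ∑ j ∈ range k, (r+m-1-j) := by
    intro k
    induction k with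
    | zero => intro _; simp
    | succ n ih =>
      intro hn
      rw [show t + (n+1) = (t+n)+1 by omega, sum_range_succ, sum_range_succ, ih (by omega)]
      have : hh (t + n) = r + m - 1 - n := by
        simp only [hhh]; split_ifs <;> omega
      rw [this]; ring
  have step3 : ∑ i ∈ range t, hh i = (t - 1) + r := by
    obtain ⟨t', rfl⟩ : ∃ t', t = t' + 1 := ⟨t - 1, by omega⟩
    rw [sum_range_succ]
    have h1 : ∀ i ∈ range t', hh i = 1 := by
      intro i hi; rw [mem_range] at hi
      simp only [hhh]; split_ifs <;> omega
    rw [sum_congr rfl h1, sum_const, card_range, smul_eq_mul]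
    have : hh t' = r := by simp only [hhh]; split_ifs <;> omega
    rw [this]; omega
  have step4 : ∑ j ∈ range (r+m), (r+m-1-j) = ∑ j ∈ range (r+m), j :=
    Finset.sum_range_reflect (fun j => j) (r+m)
  rw [show p = t + (r + m) from by omega] at *
  rw [step2 (r+m) le_rfl, step3, step4]

end count

section edges
variable {p t r : ℕ}

private lemma edge_card (p t r : ℕ) :
    (myG p t r).edgeFinset.card
      = ∑ i ∈ range p, ∑ j ∈ range p, (if i < j ∧ rel t r i j then 1 else 0) := by
  classical
  set F : Finset (Fin p × Fin p) :=
    univ.filter (fun ab => ab.1.val < ab.2.val ∧ rel t r ab.1.val ab.2.val) with hF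
  have himg : (myG p t r).edgeFinset = F.image Sym2.mk.uncurry := by
    ext e
    refine Sym2.ind (fun a b => ?_) e
    rw [SimpleGraph.mem_edgeFinset, SimpleGraph.mem_edgeSet]
    constructor
    · rintro (⟨h1, h2⟩ | ⟨h1, h2⟩)
      · exact mem_image.mpr ⟨(a, b), mem_filter.mpr ⟨mem_univ _, h1, h2⟩, rfl⟩
      · exact mem_image.mpr ⟨(b, a), mem_filter.mpr ⟨mem_univ _, h1, h2⟩, Sym2.eq_swap⟩
    · intro h
      obtain ⟨⟨c, d⟩, hcd, he⟩ := mem_image.mp h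
      obtain ⟨-, h1, h2⟩ := mem_filter.mp hcd
      rcases Sym2.eq_iff.mp he with ⟨rfl, rfl⟩ | ⟨rfl, rfl⟩
      · exact Or.inl ⟨h1, h2⟩
      · exact Or.inr ⟨h1, h2⟩
  rw [himg, Finset.card_image_of_injOn ?inj]
  case inj =>
    rintro ⟨a, b⟩ hab ⟨c, d⟩ hcd he
    obtain ⟨-, h1, -⟩ := mem_filter.mp hab
    obtain ⟨-, h2, -⟩ := mem_filter.mp hcd
    rcases Sym2.eq_iff.mp he with ⟨rfl, rfl⟩ | ⟨rfl, rfl⟩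
    · rfl
    · simp only [Prod.fst, Prod.snd] at h1 h2; omega
  rw [hF, Finset.card_filter, ← Finset.univ_product_univ, Finset.sum_product]
  rw [Fin.sum_univ_eq_sum_range
    (fun i => ∑ b : Fin p, if i < b.val ∧ rel t r i b.val then 1 else 0) p]
  refine sum_congr rfl fun i _ => ?_
  exact Fin.sum_univ_eq_sum_range (fun j => if i < j ∧ rel t r i j then 1 else 0) p

end edges

private lemma main_construction (p t r m : ℕ) (hp : p = t + r + m)
    (ht : 1 ≤ t) (hr : 1 ≤ r) :
    ∃ (G : SimpleGraph (Fin p)) (_ : DecidableRel G.Adj),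
      G.Connected ∧
      G.edgeFinset.card = (t - 1) + r + (∑ i ∈ range (r + m), i) ∧
      ∃ x : Fin p,
        (∑ y, G.dist x y) = (∑ i ∈ range t, i) + r * t + m * (t + 1) := by
  subst hp
  have hp0 : 0 < t + r + m := by omega
  refine ⟨myG _ t r, myG.dec _ t r, myG_connected hp0, ?_, ⟨0, hp0⟩, ?_⟩
  · rw [edge_card, count_N t r m ht hr]
  · have h1 : ∑ y : Fin (t+r+m), (myG _ t r).dist ⟨0, hp0⟩ y
        = ∑ y : Fin (t+r+m), dd t r y.val := by
      refine sum_congr rfl fun y _ => ?_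
      have := dist_eq hp0 ht hr (by omega) y.val y.isLt
      simpa using this
    rw [h1, Fin.sum_univ_eq_sum_range (fun j => dd t r j), sum_dd hr]

private lemma find_kr (n : ℕ) (hn : 1 ≤ n) :
    ∀ e, e ≤ ∑ i ∈ range n, i →
      ∃ k r, 1 ≤ r ∧ r ≤ k ∧ k ≤ n ∧ e = (∑ i ∈ range (k - 1), i) + (r - 1) := by
  intro e
  induction e with
  | zero => intro _; exact ⟨1, 1, le_rfl, le_rfl, hn, by simp⟩
  | succ e ih =>
    intro he
    obtain ⟨k, r, hr1, hrk, hkn, hrep⟩ := ih (by omega)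
    by_cases h : r < k
    · exact ⟨k, r + 1, by omega, by omega, hkn, by omega⟩
    · have hrk' : r = k := by omega
      have hTk : ∑ i ∈ range k, i = (∑ i ∈ range (k - 1), i) + (k - 1) := by
        conv_lhs => rw [show k = (k - 1) + 1 by omega]
        rw [sum_range_succ]
      have hkn' : k < n := by
        rcases eq_or_lt_of_le hkn with rfl | h'
        · omega
        · exact h'
      refine ⟨k + 1, 2, by omega, by omega, by omega, ?_⟩
      have h2 : (∑ i ∈ range (k + 1 - 1), i) = ∑ i ∈ range k, i := by norm_num
      omega

/-- For all `p ≥ 1` and `q` with `p - 1 ≤ q ≤ p (p - 1) / 2`, there is a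
connected simple graph with `p` vertices and `q` edges having a vertex whose
status attains the upper bound `(p - 1)(p + 2) / 2 - q`. -/
theorem status_upper_bound_sharp (p q : ℕ) (hp : 1 ≤ p)
    (hq1 : p - 1 ≤ q) (hq2 : q ≤ p * (p - 1) / 2) :
    ∃ (G : SimpleGraph (Fin p)) (_ : DecidableRel G.Adj),
      G.Connected ∧ G.edgeFinset.card = q ∧
        ∃ x : Fin p,
          2 * (∑ y, G.dist x y : ℤ) = ((p : ℤ) - 1) * ((p : ℤ) + 2) - 2 * q := by
  rcases eq_or_lt_of_le hp with hp1 | hp2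
  · -- p = 1
    subst hp1
    have hq0 : q = 0 := by simpa using hq2
    subst hq0
    refine ⟨⊥, by infer_instance, ?_, ?_, 0, ?_⟩
    · rw [SimpleGraph.connected_iff_exists_forall_reachable]
      exact ⟨0, fun v => by rw [Subsingleton.elim v 0]⟩
    · simp
    · simp [SimpleGraph.dist_self]
  · -- p ≥ 2
    have h2 : (∑ i ∈ range p, i) * 2 = p * (p - 1) := Finset.sum_range_id_mul_two p
    have hq2' : q ≤ ∑ i ∈ range p, i := by omega
    have hsp : ∑ i ∈ range p, i = (∑ i ∈ range (p - 1), i) + (p - 1) := by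
      conv_lhs => rw [show p = (p - 1) + 1 by omega]
      rw [sum_range_succ]
    obtain ⟨k, r, hr1, hrk, hkn, hrep⟩ := find_kr (p - 1) (by omega) (q - (p - 1)) (by omega)
    obtain ⟨G, inst, hconn, hcard, x, hsum⟩ :=
      main_construction p (p - k) r (k - r) (by omega) (by omega) hr1
    have hk : r + (k - r) = k := by omega
    rw [hk] at hcard
    have hTk : ∑ i ∈ range k, i = (∑ i ∈ range (k - 1), i) + (k - 1) := by
      conv_lhs => rw [show k = (k - 1) + 1 by omega]
      rw [sum_range_succ]
    refine ⟨G, inst, hconn, by omega, x, ?_⟩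
    obtain ⟨t', ht'⟩ : ∃ t', p - k = t' + 1 := ⟨p - k - 1, by omega⟩
    obtain ⟨r', hr'⟩ : ∃ r', r = r' + 1 := ⟨r - 1, by omega⟩
    have hm : k - r = k - r := rfl
    set m := k - r with hmdef
    have hk1 : k - 1 = r' + m := by omega
    rw [hk1] at hrep
    rw [ht', hr'] at hsum
    -- Gauss facts
    have g1 : (∑ i ∈ range (t' + 1), i) * 2 = (t' + 1) * t' := by
      have := Finset.sum_range_id_mul_two (t' + 1)
      simpa using this
    have g2 : (∑ i ∈ range (r' + m), i) * 2 + (r' + m) * 2 = (r' + m + 1) * (r' + m) := by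
      have := Finset.sum_range_id_mul_two (r' + m + 1)
      rw [sum_range_succ] at this
      simpa [add_mul] using this
    have hq : q = (t' + r' + m + 1) + (∑ i ∈ range (r' + m), i) + r' := by omega
    have hpz : (p : ℤ) = (t' : ℤ) + r' + m + 2 := by
      have : p = t' + r' + m + 2 := by omega
      exact_mod_cast this
    have hqz : (q : ℤ) = ((t' : ℤ) + r' + m + 1) + ((∑ i ∈ range (r' + m), i : ℕ) : ℤ) + r' := by
      exact_mod_cast hq
    have zg1 : ((∑ i ∈ range (t' + 1), i : ℕ) : ℤ) * 2 = ((t' : ℤ) + 1) * t' := by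
      exact_mod_cast g1
    have zg2 : ((∑ i ∈ range (r' + m), i : ℕ) : ℤ) * 2 + ((r' : ℤ) + m) * 2
        = ((r' : ℤ) + m + 1) * ((r' : ℤ) + m) := by exact_mod_cast g2
    have hcast : (∑ y, (G.dist x y : ℤ)) = ((∑ y, G.dist x y : ℕ) : ℤ) := by
      push_cast; rfl
    rw [hcast, hsum, hpz, hqz]
    push_cast at zg1 zg2 ⊢
    linear_combination zg1 + zg2
end

section
/- Let G be a finite connected simple graph with p vertices and q edges, and let μ be a natural number with μ ≥ 1. For every vertex x of G, the ordinal ω^μ · s(x) (where s(x) is the status of x in G and ω is the first infinite ordinal) satisfies the two-sided bound ω^μ · (p − 1) ≤ ω^μ · s(x) and 2 · (ω^μ · s(x)) ≤ ω^μ · ((p − 1)(p + 2) − 2q). (This is the transfinite status bound of the paper, expressed via the finite replacement 0-graph: the μ-status of any nonsingleton node of the transfinite graph equals ω^μ times the status of the corresponding vertex of the replacement graph.) -/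
/-!
Write `d y` for `G.dist x y`. If `d z < d y - 1` then `z` and `y` are distinct and non-adjacent,
and a shortest path from `x` to `y` supplies such a `z` at each distance `0, …, d y - 2`.
The pairs `{z, y}` are pairwise distinct non-edges, because `y` is the endpoint farther from `x`;
hence `∑ y, (d y - 1) ≤ C(p, 2) - q`, which rearranges to `2 s(x) ≤ (p - 1)(p + 2) - 2q`.
The factor `2` moves through `ω ^ μ` because `n * ω ^ b ≤ ω ^ b * n` for every natural `n`.
-/

open Finset

theorem Nat.sub_one_mul_add_two_eq (p : ℕ) : (p - 1) * (p + 2) = 2 * (p - 1 + p.choose 2) := by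
  rw [Nat.choose_two_right, mul_add 2, Nat.two_mul_div_two_of_even (Nat.even_mul_pred_self p)]
  cases p with
  | zero => rfl
  | succ n => rw [Nat.add_sub_cancel]; ring

namespace SimpleGraph

variable {V : Type*} {G : SimpleGraph V}

lemma exists_dist_eq_of_le {x y : V} {k : ℕ} (hk : k ≤ G.dist x y) : ∃ z, G.dist x z = k := by
  by_cases hxy : G.Reachable x y
  · obtain ⟨w, hw⟩ := hxy.exists_walk_length_eq_dist
    refine ⟨w.getVert k, ?_⟩
    rw [← length_eq_dist_of_subwalk hw (w.isSubwalk_take k), Walk.take_length]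
    omega
  · exact ⟨x, by simp_all [dist_eq_zero_of_not_reachable]⟩

variable [Fintype V]

lemma le_card_filter_dist_lt {x y : V} {m : ℕ} (hm : m ≤ G.dist x y) :
    m ≤ #{z | G.dist x z < m} := by
  classical
  calc m = #(range m) := (card_range m).symm
    _ ≤ #(image (G.dist x) {z | G.dist x z < m}) := by
        refine card_le_card fun k hk => ?_
        obtain ⟨z, hz⟩ := exists_dist_eq_of_le (hk := (mem_range.1 hk).le.trans hm)
        simp only [mem_image, mem_filter_univ]
        exact ⟨z, hz ▸ mem_range.1 hk, hz⟩
    _ ≤ _ := card_image_le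

lemma card_edgeFinset_add_card_edgeFinset_compl [DecidableEq V] [DecidableRel G.Adj] :
    #G.edgeFinset + #Gᶜ.edgeFinset = (Fintype.card V).choose 2 := by
  have hcompl : Gᶜ.edgeFinset = (⊤ : SimpleGraph V).edgeFinset \ G.edgeFinset := by
    rw [← edgeFinset_sdiff, ← coe_inj, coe_edgeFinset, coe_edgeFinset, top_sdiff]
  rw [← card_edgeFinset_top_eq_card_choose_two, hcompl, add_comm,
    card_sdiff_add_card_eq_card (edgeFinset_mono le_top)]

lemma sum_dist_sub_one_le_card_edgeFinset_compl [DecidableEq V] [DecidableRel G.Adj] (x : V) :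
    ∑ y, (G.dist x y - 1) ≤ #Gᶜ.edgeFinset := by
  let pairs := univ.sigma fun y => ({z | G.dist x z < G.dist x y - 1} : Finset V)
  have hmaps : ∀ a ∈ pairs, s(a.2, a.1) ∈ Gᶜ.edgeFinset := by
    rintro ⟨y, z⟩ ha
    dsimp only
    simp only [pairs, mem_sigma, mem_univ, mem_filter, true_and] at ha
    rw [mem_edgeFinset, mem_edgeSet, compl_adj]
    refine ⟨by rintro rfl; omega, fun hzy => ?_⟩
    have := hzy.reachable.dist_triangle_right x
    rw [dist_eq_one_iff_adj.2 hzy] at this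
    omega
  have hinj : Set.InjOn (fun a : Σ _ : V, V => s(a.2, a.1)) pairs := by
    rintro ⟨y, z⟩ ha ⟨y', z'⟩ ha' heq
    dsimp only at heq
    simp only [pairs, coe_sigma, Set.mem_sigma_iff, coe_univ, Set.mem_univ, coe_filter,
      Set.mem_ofPred_eq, true_and] at ha ha'
    rcases Sym2.eq_iff.1 heq with ⟨rfl, rfl⟩ | ⟨rfl, rfl⟩
    · rfl
    · omega
  calc ∑ y, (G.dist x y - 1)
      ≤ ∑ y, #({z | G.dist x z < G.dist x y - 1} : Finset V) :=
        sum_le_sum fun y _ => le_card_filter_dist_lt (Nat.sub_le _ 1)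
    _ = #pairs := (card_sigma _ _).symm
    _ ≤ #Gᶜ.edgeFinset := card_le_card_of_injOn _ hmaps hinj

lemma sum_dist_le_card_sub_one_add_sum (x : V) :
    ∑ y, G.dist x y ≤ (Fintype.card V - 1) + ∑ y, (G.dist x y - 1) := by
  classical
  calc ∑ y, G.dist x y = ∑ y ∈ univ.erase x, G.dist x y := by
        rw [← sum_erase_add _ _ (mem_univ x), dist_self, add_zero]
    _ ≤ ∑ y ∈ univ.erase x, (1 + (G.dist x y - 1)) := sum_le_sum fun y _ => by omega
    _ ≤ (Fintype.card V - 1) + ∑ y, (G.dist x y - 1) := by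
        rw [sum_add_distrib, sum_const, smul_eq_mul, mul_one, card_erase_of_mem (mem_univ x),
          card_univ]
        gcongr
        exact subset_univ _

lemma sum_dist_add_card_edgeFinset_le [DecidableRel G.Adj] (x : V) :
    ∑ y, G.dist x y + #G.edgeFinset ≤ (Fintype.card V - 1) + (Fintype.card V).choose 2 := by
  classical
  have := sum_dist_sub_one_le_card_edgeFinset_compl (G := G) x
  have := card_edgeFinset_add_card_edgeFinset_compl (G := G)
  have := sum_dist_le_card_sub_one_add_sum (G := G) x
  omega

lemma Connected.card_sub_one_le_sum_dist (hG : G.Connected) (x : V) :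
    Fintype.card V - 1 ≤ ∑ y, G.dist x y := by
  classical
  calc Fintype.card V - 1 = ∑ y ∈ univ.erase x, 1 := by simp [card_erase_of_mem]
    _ ≤ ∑ y ∈ univ.erase x, G.dist x y :=
        sum_le_sum fun y hy => hG.pos_dist_of_ne (ne_of_mem_erase hy).symm
    _ ≤ ∑ y, G.dist x y := sum_le_sum_of_subset (subset_univ _)

lemma two_mul_sum_dist_le [DecidableRel G.Adj] (x : V) :
    2 * ∑ y, G.dist x y ≤
      (Fintype.card V - 1) * (Fintype.card V + 2) - 2 * #G.edgeFinset := by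
  have := sum_dist_add_card_edgeFinset_le (G := G) x
  rw [Nat.sub_one_mul_add_two_eq]
  omega

end SimpleGraph

namespace Ordinal

theorem natCast_mul_omega0_opow {n : ℕ} (hn : 0 < n) {b : Ordinal} (hb : 0 < b) :
    n * ω ^ b = ω ^ b :=
  mul_omega0_dvd (by exact_mod_cast hn) (natCast_lt_omega0 n)
    (by simpa using opow_dvd_opow ω (Order.one_le_iff_pos.2 hb))

theorem natCast_mul_omega0_opow_le (n : ℕ) (b : Ordinal) : n * ω ^ b ≤ ω ^ b * n := by
  rcases eq_zero_or_pos b with rfl | hb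
  · simp
  rcases n.eq_zero_or_pos with rfl | hn
  · simp
  rw [natCast_mul_omega0_opow hn hb]
  exact le_mul_left _ (by exact_mod_cast hn)

end Ordinal

open Ordinal in
theorem transfinite_status_bounds_general {V : Type} [Fintype V] (G : SimpleGraph V)
    [DecidableRel G.Adj] (hG : G.Connected) (μ : ℕ) (x : V) :
    (omega0 ^ (μ : Ordinal)) * ((Fintype.card V - 1 : ℕ) : Ordinal) ≤
        (omega0 ^ (μ : Ordinal)) * ((∑ y, G.dist x y : ℕ) : Ordinal) ∧
      2 * ((omega0 ^ (μ : Ordinal)) * ((∑ y, G.dist x y : ℕ) : Ordinal)) ≤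
        (omega0 ^ (μ : Ordinal)) *
          (((Fintype.card V - 1) * (Fintype.card V + 2)
            - 2 * G.edgeFinset.card : ℕ) : Ordinal) := by
  refine ⟨mul_le_mul_right (by exact_mod_cast hG.card_sub_one_le_sum_dist x) _, ?_⟩
  calc 2 * (ω ^ (μ : Ordinal) * ((∑ y, G.dist x y : ℕ) : Ordinal))
      = ((2 : ℕ) * ω ^ (μ : Ordinal)) * ((∑ y, G.dist x y : ℕ) : Ordinal) := by
        rw [Nat.cast_ofNat, mul_assoc]
    _ ≤ (ω ^ (μ : Ordinal) * (2 : ℕ)) * ((∑ y, G.dist x y : ℕ) : Ordinal) :=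
        mul_le_mul_left (natCast_mul_omega0_opow_le 2 _) _
    _ = ω ^ (μ : Ordinal) * ((2 * ∑ y, G.dist x y : ℕ) : Ordinal) := by
        rw [mul_assoc, natCast_mul]
    _ ≤ _ := mul_le_mul_right (by exact_mod_cast G.two_mul_sum_dist_le x) _

open Ordinal in
/-- Transfinite status bounds: if `G` is the finite replacement `0`-graph of a
`μ`-connected transfinite graph of rank `μ ≥ 1`, with `p` vertices and `q`
edges, then the `μ`-status `ω^μ · s(x)` of any vertex `x` satisfies
`ω^μ · (p - 1) ≤ ω^μ · s(x)` and `2 · (ω^μ · s(x)) ≤ ω^μ · ((p-1)(p+2) - 2q)`. -/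
theorem transfinite_status_bounds {V : Type} [Fintype V] (G : SimpleGraph V)
    [DecidableRel G.Adj] (hG : G.Connected) (μ : ℕ) (hμ : 1 ≤ μ) (x : V) :
    (omega0 ^ (μ : Ordinal)) * ((Fintype.card V - 1 : ℕ) : Ordinal) ≤
        (omega0 ^ (μ : Ordinal)) * ((∑ y, G.dist x y : ℕ) : Ordinal) ∧
      2 * ((omega0 ^ (μ : Ordinal)) * ((∑ y, G.dist x y : ℕ) : Ordinal)) ≤
        (omega0 ^ (μ : Ordinal)) *
          (((Fintype.card V - 1) * (Fintype.card V + 2)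
            - 2 * G.edgeFinset.card : ℕ) : Ordinal) :=
  transfinite_status_bounds_general G hG μ x
end
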